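/- arXiv:2302.06652 — 8 statements merged into one kernel-verified Lean document; each statement's English description precedes it below -/
import Mathlib

section
/- Let p, q ∈ [1,∞] with 1/p + 1/q = 1, let F ⊆ [0,1]ⁿ be a convex set, let η > 0, and let R : ℝⁿ → ℝ be β-strongly convex with respect to the ℓ_p norm on F for some β > 0. Let x₁,…,x_T ∈ [0,1]ⁿ and define the FTRL iterates: f_t ∈ F minimizes f ↦ ⟨f, Σ_{s=1}^{t-1} x_s⟩ + R(f)/η over F (so f₁ minimizes R/η over F). Then for every t, ‖f_{t+1} − f_t‖_p ≤ 2ηn/β. -/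
open scoped BigOperators ENNReal

noncomputable section

/-- The bilinear pairing `⟨a, b⟩ = ∑ i, a i * b i` on `ℝⁿ`. -/
def ip {n : ℕ} (a b : Fin n → ℝ) : ℝ := ∑ i, a i * b i

/-- The `ℓ_p` norm on `ℝⁿ`, for `p ∈ [1, ∞]` (`‖a‖_∞ = max_i |a i|`). -/
def lpNorm {n : ℕ} (p : ℝ≥0∞) (a : Fin n → ℝ) : ℝ :=
  if p = ⊤ then ⨆ i, |a i| else (∑ i, |a i| ^ p.toReal) ^ (1 / p.toReal)

/-- `R` is `β`-strongly convex with respect to the `ℓ_p` norm on the convex set `F`. -/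
def StronglyConvexOnWrt {n : ℕ} (F : Set (Fin n → ℝ)) (β : ℝ) (p : ℝ≥0∞)
    (R : (Fin n → ℝ) → ℝ) : Prop :=
  ∀ a ∈ F, ∀ b ∈ F, ∀ l : ℝ, 0 ≤ l → l ≤ 1 →
    R (l • a + (1 - l) • b) ≤
      l * R a + (1 - l) * R b - β / 2 * l * (1 - l) * (lpNorm p (a - b)) ^ 2

lemma lpNorm_nonneg {n : ℕ} (p : ℝ≥0∞) (a : Fin n → ℝ) : 0 ≤ lpNorm p a := by
  unfold lpNorm
  split
  · exact Real.iSup_nonneg fun i => abs_nonneg _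
  · exact Real.rpow_nonneg (Finset.sum_nonneg fun i _ => Real.rpow_nonneg (abs_nonneg _) _) _

lemma lpNorm_neg {n : ℕ} (p : ℝ≥0∞) (a : Fin n → ℝ) : lpNorm p (-a) = lpNorm p a := by
  simp [lpNorm, abs_neg]

lemma abs_le_lpNorm {n : ℕ} {p : ℝ≥0∞} (hp : 1 ≤ p) (a : Fin n → ℝ) (i : Fin n) :
    |a i| ≤ lpNorm p a := by
  unfold lpNorm
  split
  next h => exact le_ciSup (f := fun j => |a j|) (Set.Finite.bddAbove (Set.finite_range _)) i
  next h =>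
    have hp0 : p ≠ 0 := by intro h0; simp [h0] at hp
    have hpr : 0 < p.toReal := ENNReal.toReal_pos hp0 h
    calc |a i| = (|a i| ^ p.toReal) ^ (1 / p.toReal) := by
          rw [← Real.rpow_mul (abs_nonneg _), mul_one_div, div_self hpr.ne', Real.rpow_one]
      _ ≤ (∑ j, |a j| ^ p.toReal) ^ (1 / p.toReal) :=
          Real.rpow_le_rpow (Real.rpow_nonneg (abs_nonneg _) _)
            (Finset.single_le_sum (fun j _ => Real.rpow_nonneg (abs_nonneg _) _)
              (Finset.mem_univ i)) (by positivity)

lemma ip_convex {n : ℕ} (l : ℝ) (a b S : Fin n → ℝ) :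
    ip (l • a + (1 - l) • b) S = l * ip a S + (1 - l) * ip b S := by
  simp [ip, Finset.mul_sum, ← Finset.sum_add_distrib, add_mul, mul_assoc]

lemma ip_sub_left {n : ℕ} (a b S : Fin n → ℝ) : ip (a - b) S = ip a S - ip b S := by
  simp [ip, sub_mul, Finset.sum_sub_distrib]

lemma ip_add_right {n : ℕ} (a S T : Fin n → ℝ) : ip a (S + T) = ip a S + ip a T := by
  simp [ip, mul_add, Finset.sum_add_distrib]

lemma ip_le_card_mul {n : ℕ} {p : ℝ≥0∞} (hp : 1 ≤ p) (d x : Fin n → ℝ)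
    (hx0 : (0 : Fin n → ℝ) ≤ x) (hx1 : x ≤ 1) : ip d x ≤ n * lpNorm p d := by
  calc ip d x ≤ ∑ i, |d i| := by
        refine Finset.sum_le_sum fun i _ => ?_
        calc d i * x i ≤ |d i * x i| := le_abs_self _
          _ = |d i| * |x i| := abs_mul _ _
          _ ≤ |d i| * 1 := by
              refine mul_le_mul_of_nonneg_left ?_ (abs_nonneg _)
              have h0 : (0:ℝ) ≤ x i := by simpa using hx0 i
              have h1 : x i ≤ 1 := by simpa using hx1 i
              rw [abs_le]; constructor <;> linarith
          _ = |d i| := mul_one _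
    _ ≤ ∑ _i : Fin n, lpNorm p d := Finset.sum_le_sum fun i _ => abs_le_lpNorm hp d i
    _ = n * lpNorm p d := by simp [Finset.sum_const, mul_comm]

/-- **Consecutive strategies of FTRL are `O(η)`-close.**
With a `β`-strongly convex regularizer (w.r.t. `ℓ_p`), losses in `[0,1]ⁿ` and FTRL iterates
`f t = argmin_{f ∈ F} ⟨f, ∑_{s=1}^{t-1} x s⟩ + R f / η`, one has
`‖f (t+1) - f t‖_p ≤ 2 η n / β` for every `t`. -/
theorem ftrl_consecutive_close {n T : ℕ} (p q : ℝ≥0∞)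
    (hp : 1 ≤ p) (hq : 1 ≤ q) (hpq : 1 / p + 1 / q = 1)
    (F : Set (Fin n → ℝ)) (hFsub : F ⊆ Set.Icc 0 1) (hFconv : Convex ℝ F)
    (η : ℝ) (hη : 0 < η) (β : ℝ) (hβ : 0 < β)
    (R : (Fin n → ℝ) → ℝ) (hR : StronglyConvexOnWrt F β p R)
    (x : ℕ → (Fin n → ℝ)) (hx : ∀ t ∈ Finset.Icc 1 T, x t ∈ Set.Icc 0 1)
    (f : ℕ → (Fin n → ℝ))
    (hf : ∀ t, 1 ≤ t → t ≤ T + 1 → f t ∈ F ∧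
      ∀ f' ∈ F, ip (f t) (∑ s ∈ Finset.Icc 1 (t - 1), x s) + R (f t) / η ≤
        ip f' (∑ s ∈ Finset.Icc 1 (t - 1), x s) + R f' / η) :
    ∀ t, 1 ≤ t → t ≤ T → lpNorm p (f (t + 1) - f t) ≤ 2 * η * n / β := by
  intro t ht hT
  obtain ⟨haF, haMin⟩ := hf t ht (by omega)
  obtain ⟨hbF, hbMin⟩ := hf (t + 1) (by omega) (by omega)
  simp only [Nat.add_sub_cancel] at hbMin
  set a := f t with ha_def
  set b := f (t + 1) with hb_def
  set S : Fin n → ℝ := ∑ s ∈ Finset.Icc 1 (t - 1), x s with hS_def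
  have hxS : (∑ s ∈ Finset.Icc 1 t, x s) = S + x t := by
    obtain ⟨u, rfl⟩ : ∃ u, t = u + 1 := ⟨t - 1, by omega⟩
    rw [hS_def, Nat.add_sub_cancel, Finset.sum_Icc_succ_top (by omega : 1 ≤ u + 1)]
  rw [hxS] at hbMin
  set D : ℝ := lpNorm p (a - b) with hD_def
  have hD0 : 0 ≤ D := lpNorm_nonneg _ _
  have hmidF : ((1:ℝ)/2) • a + (1 - (1:ℝ)/2) • b ∈ F :=
    hFconv haF hbF (by norm_num) (by norm_num) (by norm_num)
  have hmidF2 : ((1:ℝ)/2) • b + (1 - (1:ℝ)/2) • a ∈ F :=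
    hFconv hbF haF (by norm_num) (by norm_num) (by norm_num)
  have hRc1 := hR a haF b hbF (1/2) (by norm_num) (by norm_num)
  have hRc2 := hR b hbF a haF (1/2) (by norm_num) (by norm_num)
  have hDsym : lpNorm p (b - a) = D := by rw [hD_def, ← lpNorm_neg p (b - a), neg_sub]
  rw [hDsym] at hRc2
  have ηne : η ≠ 0 := hη.ne'
  have h1 := mul_le_mul_of_nonneg_right (haMin _ hmidF) hη.le
  rw [add_mul, add_mul, div_mul_cancel₀ _ ηne, div_mul_cancel₀ _ ηne, ip_convex] at h1
  have h2 := mul_le_mul_of_nonneg_right (hbMin _ hmidF2) hη.le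
  rw [add_mul, add_mul, div_mul_cancel₀ _ ηne, div_mul_cancel₀ _ ηne, ip_convex] at h2
  simp only [ip_add_right] at h2
  have key : β / 2 * D ^ 2 ≤ η * (ip a (x t) - ip b (x t)) := by nlinarith [h1, h2, hRc1, hRc2]
  have hxt := hx t (Finset.mem_Icc.mpr ⟨ht, hT⟩)
  have hiple : ip (a - b) (x t) ≤ n * D := ip_le_card_mul hp (a - b) (x t) hxt.1 hxt.2
  rw [ip_sub_left] at hiple
  have key2 : β / 2 * D ^ 2 ≤ η * (n * D) :=
    le_trans key (mul_le_mul_of_nonneg_left hiple hη.le)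
  show lpNorm p (b - a) ≤ 2 * η * n / β
  rw [hDsym, le_div_iff₀ hβ]
  rcases hD0.eq_or_lt with h | h
  · rw [← h, zero_mul]; positivity
  · nlinarith [key2, h]
end
end

section
/- Let F ⊆ [0,1]ⁿ be a nonempty convex set, η > 0, α ≥ 1, and R : ℝⁿ → ℝ with R(f) ≥ 0 for all f ∈ F. Let x₀ = 0 and x₁,…,x_T ∈ [0,1]ⁿ. For t = 1,…,T define: f_t ∈ F minimizing f ↦ ⟨f, Σ_{s=1}^{t-1} x_s + α x_{t-1}⟩ + R(f)/η over F (the AFTRL iterate), h_t ∈ F minimizing f ↦ ⟨f, Σ_{s=1}^{t-1} x_s + α x_t⟩ + R(f)/η over F, and g_t ∈ F minimizing f ↦ ⟨f, Σ_{s=1}^{t} x_s⟩ + R(f)/η over F. Then for every f' ∈ F: Σ_{t=1}^T ⟨f_t − h_t, x_{t-1}⟩ + Σ_{t=1}^T ⟨h_t, x_t⟩ ≤ (1/α)⟨f', Σ_{t=1}^T x_t⟩ + ((α−1)/α) Σ_{t=1}^T ⟨g_t, x_t⟩ + R(f')/(ηα). -/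
/-!
Multiply through by `α` and induct on `T`. The induction hypothesis is applied with comparator
`f (T+1)`; the three optimality conditions at round `T+1` then compare `f (T+1)` with `h (T+1)`,
`h (T+1)` with `g (T+1)`, and `g (T+1)` with `f'`, and the new terms telescope.
-/

open scoped BigOperators

noncomputable section

open Finset

section Pairing

variable {E V : Type*} [AddCommGroup E] [Module ℝ E] [AddCommGroup V] [Module ℝ V]
  (B : E →ₗ[ℝ] V →ₗ[ℝ] ℝ) (F : Set E) (ρ : E → ℝ) (α : ℝ)

theorem aftrl_round_le {S y z : V} {a b c f' : E}
    (ha : IsMinOn (fun f => B f (S + α • y) + ρ f) F a)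
    (hb : IsMinOn (fun f => B f (S + α • z) + ρ f) F b)
    (hc : IsMinOn (fun f => B f (S + z) + ρ f) F c)
    (hbF : b ∈ F) (hcF : c ∈ F) (hf' : f' ∈ F) :
    B a S + ρ a + α * B (a - b) y + α * B b z ≤
      B f' (S + z) + ρ f' + (α - 1) * B c z := by
  calc B a S + ρ a + α * B (a - b) y + α * B b z
      = (B a (S + α • y) + ρ a) - α * B b y + α * B b z := by
        simp only [map_add, map_smul, map_sub, LinearMap.sub_apply, smul_eq_mul]; ring
    _ ≤ (B b (S + α • y) + ρ b) - α * B b y + α * B b z := by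
        linarith [isMinOn_iff.1 ha b hbF]
    _ = B b (S + α • z) + ρ b := by
        simp only [map_add, map_smul, smul_eq_mul]; ring
    _ ≤ B c (S + α • z) + ρ c := isMinOn_iff.1 hb c hcF
    _ = B c (S + z) + ρ c + (α - 1) * B c z := by
        simp only [map_add, map_smul, smul_eq_mul]; ring
    _ ≤ B f' (S + z) + ρ f' + (α - 1) * B c z := by
        linarith [isMinOn_iff.1 hc f' hf']

theorem aftrl_mul_induction_inequality (hρ : ∀ f ∈ F, 0 ≤ ρ f) (x : ℕ → V) (f h g : ℕ → E)
    (T : ℕ)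
    (hf : ∀ t ∈ Icc 1 T, f t ∈ F ∧
      IsMinOn (fun f' => B f' (∑ s ∈ Icc 1 (t - 1), x s + α • x (t - 1)) + ρ f') F (f t))
    (hh : ∀ t ∈ Icc 1 T, h t ∈ F ∧
      IsMinOn (fun f' => B f' (∑ s ∈ Icc 1 (t - 1), x s + α • x t) + ρ f') F (h t))
    (hg : ∀ t ∈ Icc 1 T, g t ∈ F ∧
      IsMinOn (fun f' => B f' (∑ s ∈ Icc 1 t, x s) + ρ f') F (g t))
    {f' : E} (hf' : f' ∈ F) :
    α * (∑ t ∈ Icc 1 T, B (f t - h t) (x (t - 1)) + ∑ t ∈ Icc 1 T, B (h t) (x t)) ≤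
      B f' (∑ t ∈ Icc 1 T, x t) + (α - 1) * ∑ t ∈ Icc 1 T, B (g t) (x t) + ρ f' := by
  induction T generalizing f' with
  | zero => simpa using hρ f' hf'
  | succ T ih =>
    have hsub : Icc 1 T ⊆ Icc 1 (T + 1) := Icc_subset_Icc_right T.le_succ
    have hlast : T + 1 ∈ Icc 1 (T + 1) := by simp
    obtain ⟨hfF, hfmin⟩ := hf (T + 1) hlast
    obtain ⟨hhF, hhmin⟩ := hh (T + 1) hlast
    obtain ⟨hgF, hgmin⟩ := hg (T + 1) hlast
    simp only [Nat.add_sub_cancel, sum_Icc_succ_top (Nat.le_add_left 1 T)] at hfmin hhmin hgmin ⊢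
    have hprev := ih (fun t ht => hf t (hsub ht)) (fun t ht => hh t (hsub ht))
      (fun t ht => hg t (hsub ht)) hfF
    have hround := aftrl_round_le B F ρ α hfmin hhmin hgmin hhF hgF hf'
    linarith

end Pairing

theorem aftrl_induction_inequality_general {n T : ℕ}
    (F : Set (Fin n → ℝ))
    (η : ℝ) (hη : 0 < η) (α : ℝ) (hα : 1 ≤ α)
    (R : (Fin n → ℝ) → ℝ) (hR : ∀ f ∈ F, 0 ≤ R f)
    (x : ℕ → (Fin n → ℝ))
    (f h g : ℕ → (Fin n → ℝ))
    (hf : ∀ t ∈ Finset.Icc 1 T, f t ∈ F ∧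
      ∀ f' ∈ F,
        ip (f t) ((∑ s ∈ Finset.Icc 1 (t - 1), x s) + α • x (t - 1)) + R (f t) / η ≤
        ip f' ((∑ s ∈ Finset.Icc 1 (t - 1), x s) + α • x (t - 1)) + R f' / η)
    (hh : ∀ t ∈ Finset.Icc 1 T, h t ∈ F ∧
      ∀ f' ∈ F,
        ip (h t) ((∑ s ∈ Finset.Icc 1 (t - 1), x s) + α • x t) + R (h t) / η ≤
        ip f' ((∑ s ∈ Finset.Icc 1 (t - 1), x s) + α • x t) + R f' / η)
    (hg : ∀ t ∈ Finset.Icc 1 T, g t ∈ F ∧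
      ∀ f' ∈ F,
        ip (g t) (∑ s ∈ Finset.Icc 1 t, x s) + R (g t) / η ≤
        ip f' (∑ s ∈ Finset.Icc 1 t, x s) + R f' / η) :
    ∀ f' ∈ F,
      (∑ t ∈ Finset.Icc 1 T, ip (f t - h t) (x (t - 1))) +
        (∑ t ∈ Finset.Icc 1 T, ip (h t) (x t)) ≤
      (1 / α) * ip f' (∑ t ∈ Finset.Icc 1 T, x t) +
        ((α - 1) / α) * ∑ t ∈ Finset.Icc 1 T, ip (g t) (x t) + R f' / (η * α) := by
  intro f' hf'
  -- `ip a b` and `dotProductBilin ℝ ℝ a b` agree definitionally.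
  have hscaled := aftrl_mul_induction_inequality (dotProductBilin ℝ ℝ) F (fun f => R f / η) α
    (fun f hf => div_nonneg (hR f hf) hη.le) x f h g T
    (fun t ht => ⟨(hf t ht).1, isMinOn_iff.2 (hf t ht).2⟩)
    (fun t ht => ⟨(hh t ht).1, isMinOn_iff.2 (hh t ht).2⟩)
    (fun t ht => ⟨(hg t ht).1, isMinOn_iff.2 (hg t ht).2⟩) hf'
  have hα0 : 0 < α := by linarith
  calc _ ≤ (ip f' (∑ t ∈ Icc 1 T, x t) + (α - 1) * ∑ t ∈ Icc 1 T, ip (g t) (x t)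
        + R f' / η) / α := (le_div_iff₀' hα0).2 hscaled
    _ = _ := by field_simp

/-- **Key induction inequality for AFTRL** (Inequality (5) in the paper).
With `x 0 = 0`, AFTRL iterates `f t`, one-step-lookahead iterates `h t` and
be-the-leader iterates `g t`, for every `f' ∈ F`:
`∑_{t=1}^T ⟨f t - h t, x (t-1)⟩ + ∑_{t=1}^T ⟨h t, x t⟩ ≤
  (1/α) ⟨f', ∑_{t=1}^T x t⟩ + ((α-1)/α) ∑_{t=1}^T ⟨g t, x t⟩ + R f' / (η α)`. -/
theorem aftrl_induction_inequality {n T : ℕ}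
    (F : Set (Fin n → ℝ)) (hF : F.Nonempty) (hFsub : F ⊆ Set.Icc 0 1) (hFconv : Convex ℝ F)
    (η : ℝ) (hη : 0 < η) (α : ℝ) (hα : 1 ≤ α)
    (R : (Fin n → ℝ) → ℝ) (hR : ∀ f ∈ F, 0 ≤ R f)
    (x : ℕ → (Fin n → ℝ)) (hx0 : x 0 = 0)
    (hx : ∀ t ∈ Finset.Icc 1 T, x t ∈ Set.Icc (0 : Fin n → ℝ) 1)
    (f h g : ℕ → (Fin n → ℝ))
    (hf : ∀ t ∈ Finset.Icc 1 T, f t ∈ F ∧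
      ∀ f' ∈ F,
        ip (f t) ((∑ s ∈ Finset.Icc 1 (t - 1), x s) + α • x (t - 1)) + R (f t) / η ≤
        ip f' ((∑ s ∈ Finset.Icc 1 (t - 1), x s) + α • x (t - 1)) + R f' / η)
    (hh : ∀ t ∈ Finset.Icc 1 T, h t ∈ F ∧
      ∀ f' ∈ F,
        ip (h t) ((∑ s ∈ Finset.Icc 1 (t - 1), x s) + α • x t) + R (h t) / η ≤
        ip f' ((∑ s ∈ Finset.Icc 1 (t - 1), x s) + α • x t) + R f' / η)
    (hg : ∀ t ∈ Finset.Icc 1 T, g t ∈ F ∧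
      ∀ f' ∈ F,
        ip (g t) (∑ s ∈ Finset.Icc 1 t, x s) + R (g t) / η ≤
        ip f' (∑ s ∈ Finset.Icc 1 t, x s) + R f' / η) :
    ∀ f' ∈ F,
      (∑ t ∈ Finset.Icc 1 T, ip (f t - h t) (x (t - 1))) +
        (∑ t ∈ Finset.Icc 1 T, ip (h t) (x t)) ≤
      (1 / α) * ip f' (∑ t ∈ Finset.Icc 1 T, x t) +
        ((α - 1) / α) * ∑ t ∈ Finset.Icc 1 T, ip (g t) (x t) + R f' / (η * α) :=
  aftrl_induction_inequality_general F η hη α hα R hR x f h g hf hh hg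
end
end

section
/- Let p, q ∈ [1,∞] with 1/p + 1/q = 1, let F ⊆ [0,1]ⁿ be a nonempty convex compact set, η > 0, α ≥ 1, and let R : ℝⁿ → ℝ be β-strongly convex with respect to the ℓ_p norm on F for some β > 0, with R(f) ≥ 0 for all f ∈ F. Let x₀ = 0 and x₁,…,x_T ∈ [0,1]ⁿ. For t = 1,…,T let f_t ∈ F minimize f ↦ ⟨f, Σ_{s=1}^{t-1} x_s + α x_{t-1}⟩ + R(f)/η over F (the AFTRL iterate) and let g_t ∈ F minimize f ↦ ⟨f, Σ_{s=1}^{t} x_s⟩ + R(f)/η over F. Then for every f' ∈ F: Σ_{t=1}^T ⟨f_t, x_t⟩ − (1/α)⟨f', Σ_{t=1}^T x_t⟩ − ((α−1)/α) Σ_{t=1}^T ⟨g_t, x_t⟩ ≤ R(f')/(ηα) + (ηα/β) Σ_{t=1}^T ‖x_t − x_{t-1}‖_q². -/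
open scoped BigOperators ENNReal

noncomputable section

/-!
Let `g t` be the leader, i.e. the FTRL point for the true cumulative losses. By induction on `t`
("be the leader"), the sum over rounds `s ≤ t` of `⟨g s, x s⟩ + α ⟨f s - g s, x (s-1)⟩` plus the
quadratic margins `β/(4η) ‖f s - g s‖_p²` is at most the FTRL objective at any comparator: each
optimistic iterate `f s` is suboptimal for the objective at time `s - 1` and beats the leader `g s`
on its own, `(β/η)`-strongly convex, objective by that margin. What remains of the regret is
`α ⟨f t - g t, x t - x (t-1)⟩`, which Hölder's and Young's inequalities bound by the margin plus
`(η α² / β) ‖x t - x (t-1)‖_q²`; dividing by `α` gives the claim.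
-/

open Finset

lemma ip_eq_dotProduct {n : ℕ} (a b : Fin n → ℝ) : ip a b = a ⬝ᵥ b := rfl

section Holder

variable {n : ℕ}

lemma ip_le_lpNorm_one_mul_lpNorm_top (a b : Fin n → ℝ) :
    ip a b ≤ lpNorm 1 a * lpNorm ⊤ b := by
  have hb : ∀ i, |b i| ≤ ⨆ j, |b j| := le_ciSup (Set.finite_range _).bddAbove
  simp only [lpNorm, if_neg ENNReal.one_ne_top, ENNReal.toReal_one, Real.rpow_one, div_one,
    if_pos, sum_mul]
  refine sum_le_sum fun i _ => ?_
  calc a i * b i ≤ |a i| * |b i| := (le_abs_self _).trans (abs_mul _ _).le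
    _ ≤ |a i| * ⨆ j, |b j| := mul_le_mul_of_nonneg_left (hb i) (abs_nonneg _)

lemma ip_le_lpNorm_mul_lpNorm {p q : ℝ≥0∞} [p.HolderConjugate q] (a b : Fin n → ℝ) :
    ip a b ≤ lpNorm p a * lpNorm q b := by
  by_cases hp : p = ⊤
  · obtain rfl : q = 1 := (ENNReal.HolderConjugate.eq_top_iff_eq_one p q).mp hp
    subst hp
    rw [ip_eq_dotProduct, dotProduct_comm, mul_comm]
    exact ip_le_lpNorm_one_mul_lpNorm_top b a
  by_cases hq : q = ⊤
  · obtain rfl : p = 1 := (ENNReal.HolderConjugate.eq_top_iff_eq_one q p).mp hq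
    subst hq
    exact ip_le_lpNorm_one_mul_lpNorm_top a b
  simpa only [ip, lpNorm, if_neg hp, if_neg hq] using
    Real.inner_le_Lp_mul_Lq univ a b (ENNReal.HolderConjugate.toReal_of_ne_top hp hq)

end Holder

lemma mul_le_div_four_mul_sq_add_sq_div {a b c : ℝ} (hc : 0 < c) :
    a * b ≤ c / 4 * a ^ 2 + b ^ 2 / c := by
  have h : c / 4 * a ^ 2 + b ^ 2 / c - a * b = (c * a - 2 * b) ^ 2 / (4 * c) := by
    field_simp
    ring
  rw [← sub_nonneg, h]
  positivity

lemma mul_ip_le_lpNorm_sq_add_lpNorm_sq {n : ℕ} {p q : ℝ≥0∞} [p.HolderConjugate q]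
    {k c : ℝ} (hk : 0 ≤ k) (hc : 0 < c) (a b : Fin n → ℝ) :
    k * ip a b ≤ c / 4 * lpNorm p a ^ 2 + k ^ 2 / c * lpNorm q b ^ 2 := by
  calc k * ip a b ≤ lpNorm p a * (k * lpNorm q b) := by
        rw [mul_left_comm]
        exact mul_le_mul_of_nonneg_left (ip_le_lpNorm_mul_lpNorm a b) hk
    _ ≤ c / 4 * lpNorm p a ^ 2 + (k * lpNorm q b) ^ 2 / c := mul_le_div_four_mul_sq_add_sq_div hc
    _ = c / 4 * lpNorm p a ^ 2 + k ^ 2 / c * lpNorm q b ^ 2 := by ring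

/-- The objective minimized by (A)FTRL against the cumulative loss vector `v`. -/
def ftrlObjective {n : ℕ} (R : (Fin n → ℝ) → ℝ) (η : ℝ) (v u : Fin n → ℝ) : ℝ :=
  ip u v + R u / η

namespace StronglyConvexOnWrt

variable {n : ℕ} {F : Set (Fin n → ℝ)} {β : ℝ} {p : ℝ≥0∞} {R : (Fin n → ℝ) → ℝ}

lemma ftrlObjective {η : ℝ} (hη : 0 < η) (hR : StronglyConvexOnWrt F β p R) (v : Fin n → ℝ) :
    StronglyConvexOnWrt F (β / η) p (ftrlObjective R η v) := by
  intro a ha b hb l hl0 hl1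
  have hRl := div_le_div_of_nonneg_right (hR a ha b hb l hl0 hl1) hη.le
  have hip : ip (l • a + (1 - l) • b) v = l * ip a v + (1 - l) * ip b v := by
    simp only [ip_eq_dotProduct, add_dotProduct, smul_dotProduct, smul_eq_mul]
  simp only [_root_.ftrlObjective, hip]
  have hsplit : (l * R a + (1 - l) * R b - β / 2 * l * (1 - l) * lpNorm p (a - b) ^ 2) / η =
      l * (R a / η) + (1 - l) * (R b / η) - β / η / 2 * l * (1 - l) * lpNorm p (a - b) ^ 2 := by
    ring
  linarith

/-- The constant `β / 4` comes from comparing the minimizer with the midpoint of `[u, w]`. -/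
lemma add_sq_le_of_isMinOn (hF : Convex ℝ F) (hR : StronglyConvexOnWrt F β p R) {u w : Fin n → ℝ}
    (hu : u ∈ F) (hmin : IsMinOn R F u) (hw : w ∈ F) :
    R u + β / 4 * lpNorm p (u - w) ^ 2 ≤ R w := by
  have hmid : (1 / 2 : ℝ) • u + (1 - 1 / 2 : ℝ) • w ∈ F :=
    hF hu hw (by norm_num) (by norm_num) (by norm_num)
  have hconv := hR u hu w hw (1 / 2) (by norm_num) (by norm_num)
  linarith [isMinOn_iff.mp hmin _ hmid]

end StronglyConvexOnWrt

section AFTRL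

variable {n : ℕ} {F : Set (Fin n → ℝ)} {β η : ℝ} {p : ℝ≥0∞} {R : (Fin n → ℝ) → ℝ}

/-- One round of the be-the-leader argument: the optimistic iterate `f'` beats the next leader `g'`
on its own objective by a quadratic margin, and `g'` is the leader for `s + z`. -/
lemma ftrlObjective_step (hF : Convex ℝ F) (hη : 0 < η) (hR : StronglyConvexOnWrt F β p R)
    {s y z f' g' : Fin n → ℝ} {α L : ℝ}
    (hf' : f' ∈ F ∧ IsMinOn (ftrlObjective R η (s + α • y)) F f')
    (hg' : g' ∈ F ∧ IsMinOn (ftrlObjective R η (s + z)) F g')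
    (hL : ∀ u ∈ F, L ≤ ftrlObjective R η s u) :
    ∀ u ∈ F, L + (ip g' z + α * ip (f' - g') y + β / η / 4 * lpNorm p (f' - g') ^ 2) ≤
      ftrlObjective R η (s + z) u := by
  intro u hu
  have hleader := hL f' hf'.1
  have hmargin := (hR.ftrlObjective hη (s + α • y)).add_sq_le_of_isMinOn hF hf'.1 hf'.2 hg'.1
  have hmin := isMinOn_iff.mp hg'.2 u hu
  simp only [ftrlObjective, ip_eq_dotProduct, dotProduct_add, dotProduct_smul, sub_dotProduct,
    smul_eq_mul] at hleader hmargin hmin ⊢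
  linarith

lemma aftrl_potential_le (hF : Convex ℝ F) (hη : 0 < η) (hR : StronglyConvexOnWrt F β p R)
    (hR0 : ∀ u ∈ F, 0 ≤ R u) {T : ℕ} {α : ℝ} {x f g : ℕ → Fin n → ℝ}
    (hf : ∀ t ∈ Icc 1 T, f t ∈ F ∧
      IsMinOn (ftrlObjective R η ((∑ s ∈ Icc 1 (t - 1), x s) + α • x (t - 1))) F (f t))
    (hg : ∀ t ∈ Icc 1 T, g t ∈ F ∧ IsMinOn (ftrlObjective R η (∑ s ∈ Icc 1 t, x s)) F (g t)) :
    ∀ t ≤ T, ∀ u ∈ F,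
      ∑ s ∈ Icc 1 t, (ip (g s) (x s) + α * ip (f s - g s) (x (s - 1)) +
        β / η / 4 * lpNorm p (f s - g s) ^ 2) ≤ ftrlObjective R η (∑ s ∈ Icc 1 t, x s) u := by
  intro t
  induction t with
  | zero =>
    intro _ u hu
    simpa [ftrlObjective, ip_eq_dotProduct] using div_nonneg (hR0 u hu) hη.le
  | succ t ih =>
    intro ht
    have hmem : t + 1 ∈ Icc 1 T := mem_Icc.mpr ⟨by omega, ht⟩
    have hf' := hf (t + 1) hmem
    have hg' := hg (t + 1) hmem
    rw [Nat.add_sub_cancel] at hf'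
    rw [sum_Icc_succ_top (Nat.le_add_left 1 t)] at hg'
    simp only [sum_Icc_succ_top (Nat.le_add_left 1 t), Nat.add_sub_cancel]
    exact ftrlObjective_step hF hη hR hf' hg' (ih (by omega))

end AFTRL

theorem aftrl_regret_bound_general {n T : ℕ} (p q : ℝ≥0∞)
    (hpq : 1 / p + 1 / q = 1)
    (F : Set (Fin n → ℝ))
    (hFconv : Convex ℝ F)
    (η : ℝ) (hη : 0 < η) (α : ℝ) (hα : 1 ≤ α) (β : ℝ) (hβ : 0 < β)
    (R : (Fin n → ℝ) → ℝ) (hRsc : StronglyConvexOnWrt F β p R)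
    (hRnonneg : ∀ f ∈ F, 0 ≤ R f)
    (x : ℕ → (Fin n → ℝ))
    (f g : ℕ → (Fin n → ℝ))
    (hf : ∀ t ∈ Finset.Icc 1 T, f t ∈ F ∧
      ∀ f' ∈ F,
        ip (f t) ((∑ s ∈ Finset.Icc 1 (t - 1), x s) + α • x (t - 1)) + R (f t) / η ≤
        ip f' ((∑ s ∈ Finset.Icc 1 (t - 1), x s) + α • x (t - 1)) + R f' / η)
    (hg : ∀ t ∈ Finset.Icc 1 T, g t ∈ F ∧
      ∀ f' ∈ F,
        ip (g t) (∑ s ∈ Finset.Icc 1 t, x s) + R (g t) / η ≤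
        ip f' (∑ s ∈ Finset.Icc 1 t, x s) + R f' / η) :
    ∀ f' ∈ F,
      (∑ t ∈ Finset.Icc 1 T, ip (f t) (x t)) -
        (1 / α) * ip f' (∑ t ∈ Finset.Icc 1 T, x t) -
        ((α - 1) / α) * ∑ t ∈ Finset.Icc 1 T, ip (g t) (x t) ≤
      R f' / (η * α) +
        η * α / β * ∑ t ∈ Finset.Icc 1 T, (lpNorm q (x t - x (t - 1))) ^ 2 := by
  intro f' hf'
  have : p.HolderConjugate q := ENNReal.holderConjugate_iff.mpr (by simpa only [one_div] using hpq)
  have hα0 : 0 < α := one_pos.trans_le hα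
  have hpotential := aftrl_potential_le hFconv hη hRsc hRnonneg hf hg T le_rfl f' hf'
  have hround : ∀ t ∈ Icc 1 T,
      α * ip (f t) (x t) - (α - 1) * ip (g t) (x t) ≤
        ip (g t) (x t) + α * ip (f t - g t) (x (t - 1)) + β / η / 4 * lpNorm p (f t - g t) ^ 2 +
          η * α ^ 2 / β * lpNorm q (x t - x (t - 1)) ^ 2 := by
    intro t _
    have h := mul_ip_le_lpNorm_sq_add_lpNorm_sq (p := p) (q := q) hα0.le (div_pos hβ hη)
      (f t - g t) (x t - x (t - 1))
    rw [div_div_eq_mul_div, mul_comm (α ^ 2) η] at h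
    simp only [ip_eq_dotProduct, sub_dotProduct, dotProduct_sub] at h ⊢
    linarith
  have hsum := sum_le_sum hround
  simp only [sum_add_distrib, sum_sub_distrib, ← mul_sum, ftrlObjective] at hsum hpotential
  set A := ∑ t ∈ Icc 1 T, ip (f t) (x t)
  set G := ∑ t ∈ Icc 1 T, ip (g t) (x t)
  set W := ∑ t ∈ Icc 1 T, lpNorm q (x t - x (t - 1)) ^ 2
  have key : α * A - ip f' (∑ t ∈ Icc 1 T, x t) - (α - 1) * G ≤ R f' / η + η * α ^ 2 / β * W := by
    linarith
  calc A - 1 / α * ip f' (∑ t ∈ Icc 1 T, x t) - (α - 1) / α * G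
      = (α * A - ip f' (∑ t ∈ Icc 1 T, x t) - (α - 1) * G) / α := by field_simp
    _ ≤ (R f' / η + η * α ^ 2 / β * W) / α := by gcongr
    _ = R f' / (η * α) + η * α / β * W := by field_simp

/-- **Main regret inequality for AFTRL** (Inequality (4) in the paper).
For every `f' ∈ F`:
`∑_{t=1}^T ⟨f t, x t⟩ - (1/α) ⟨f', ∑_{t=1}^T x t⟩ - ((α-1)/α) ∑_{t=1}^T ⟨g t, x t⟩
  ≤ R f' / (η α) + (η α / β) ∑_{t=1}^T ‖x t - x (t-1)‖_q²`. -/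
theorem aftrl_regret_bound {n T : ℕ} (p q : ℝ≥0∞)
    (hp : 1 ≤ p) (hq : 1 ≤ q) (hpq : 1 / p + 1 / q = 1)
    (F : Set (Fin n → ℝ)) (hF : F.Nonempty) (hFsub : F ⊆ Set.Icc 0 1)
    (hFconv : Convex ℝ F) (hFcomp : IsCompact F)
    (η : ℝ) (hη : 0 < η) (α : ℝ) (hα : 1 ≤ α) (β : ℝ) (hβ : 0 < β)
    (R : (Fin n → ℝ) → ℝ) (hRsc : StronglyConvexOnWrt F β p R)
    (hRnonneg : ∀ f ∈ F, 0 ≤ R f)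
    (x : ℕ → (Fin n → ℝ)) (hx0 : x 0 = 0)
    (hx : ∀ t ∈ Finset.Icc 1 T, x t ∈ Set.Icc (0 : Fin n → ℝ) 1)
    (f g : ℕ → (Fin n → ℝ))
    (hf : ∀ t ∈ Finset.Icc 1 T, f t ∈ F ∧
      ∀ f' ∈ F,
        ip (f t) ((∑ s ∈ Finset.Icc 1 (t - 1), x s) + α • x (t - 1)) + R (f t) / η ≤
        ip f' ((∑ s ∈ Finset.Icc 1 (t - 1), x s) + α • x (t - 1)) + R f' / η)
    (hg : ∀ t ∈ Finset.Icc 1 T, g t ∈ F ∧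
      ∀ f' ∈ F,
        ip (g t) (∑ s ∈ Finset.Icc 1 t, x s) + R (g t) / η ≤
        ip f' (∑ s ∈ Finset.Icc 1 t, x s) + R f' / η) :
    ∀ f' ∈ F,
      (∑ t ∈ Finset.Icc 1 T, ip (f t) (x t)) -
        (1 / α) * ip f' (∑ t ∈ Finset.Icc 1 T, x t) -
        ((α - 1) / α) * ∑ t ∈ Finset.Icc 1 T, ip (g t) (x t) ≤
      R f' / (η * α) +
        η * α / β * ∑ t ∈ Finset.Icc 1 T, (lpNorm q (x t - x (t - 1))) ^ 2 :=
  aftrl_regret_bound_general p q hpq F hFconv η hη α hα β hβ R hRsc hRnonneg x f g hf hg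
end
end

section
/- Let p, q ∈ [1,∞] with 1/p + 1/q = 1, let F ⊆ [0,1]ⁿ be a nonempty convex compact set, η > 0, and let R : ℝⁿ → ℝ be differentiable and β-strongly convex with respect to the ℓ_p norm on F for some β > 0, with Bregman divergence D_R(a,b) = R(a) − R(b) − ⟨∇R(b), a−b⟩. Let x₁,…,x_T ∈ [0,1]ⁿ, let g₁ ∈ F minimize R over F, and for each t ≥ 1 let g_{t+1} ∈ F minimize g ↦ η⟨g, x_t⟩ + D_R(g, g_t) over F. Then for every f' ∈ F: Σ_{t=1}^T ⟨g_{t+1}, x_t⟩ ≤ Σ_{t=1}^T ⟨f', x_t⟩ + R_max²/η − (β/(2η)) Σ_{t=1}^T ‖g_{t+1} − g_t‖_p², where R_max² := max_{f∈F} R(f) − min_{f∈F} R(f). -/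
open scoped BigOperators ENNReal

noncomputable section

/-- The Bregman divergence `D_R(a,b) = R a - R b - ⟨∇R b, a - b⟩`. -/
def bregman {n : ℕ} (R : (Fin n → ℝ) → ℝ) (a b : Fin n → ℝ) : ℝ :=
  R a - R b - fderiv ℝ R b (a - b)

/-!
Each mirror step satisfies the three-point inequality
`η⟨g_{t+1}, x_t⟩ + D(g_{t+1}, g_t) + D(f', g_{t+1}) ≤ η⟨f', x_t⟩ + D(f', g_t)`: first-order
optimality of `g_{t+1}` on the convex set `F` gives it through the three-point identity for
Bregman divergences. Strong convexity bounds `D(g_{t+1}, g_t) ≥ β/2 ‖g_{t+1} - g_t‖_p²`.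
Summing over `t`, the terms `D(f', g_t)` telescope to `D(f', g_1) - D(f', g_{T+1})`; the last is
nonnegative, and `D(f', g_1) ≤ R f' - R g_1 ≤ R_max²` since `g_1` minimizes `R` on `F`.
-/

theorem IsMinOn.hasFDerivAt_sub_nonneg {E : Type*} [NormedAddCommGroup E] [NormedSpace ℝ E]
    {f : E → ℝ} {f' : E →L[ℝ] ℝ} {s : Set E} {a u : E} (h : IsMinOn f s a)
    (hs : Convex ℝ s) (ha : a ∈ s) (hu : u ∈ s) (hf : HasFDerivAt f f' a) :
    0 ≤ f' (u - a) :=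
  h.localize.hasFDerivWithinAt_nonneg hf.hasFDerivWithinAt
    (sub_mem_posTangentConeAt_of_segment_subset (hs.segment_subset ha hu))

theorem Finset.sum_Icc_one_sub_succ {M : Type*} [AddCommGroup M] (f : ℕ → M) (T : ℕ) :
    ∑ t ∈ Finset.Icc 1 T, (f t - f (t + 1)) = f 1 - f (T + 1) := by
  induction T with
  | zero => simp
  | succ T ih =>
    rw [Finset.sum_Icc_succ_top (by omega), ih]
    abel

section Bregman

variable {n : ℕ} {R : (Fin n → ℝ) → ℝ}

def ipLeft (y : Fin n → ℝ) : (Fin n → ℝ) →L[ℝ] ℝ := ∑ i, y i • ContinuousLinearMap.proj i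

theorem ipLeft_apply (y u : Fin n → ℝ) : ipLeft y u = ip u y := by
  simp [ipLeft, ip, mul_comm]

theorem hasFDerivAt_bregman_left {a : Fin n → ℝ} (hR : DifferentiableAt ℝ R a) (b : Fin n → ℝ) :
    HasFDerivAt (fun u => bregman R u b) (fderiv ℝ R a - fderiv ℝ R b) a :=
  (hR.hasFDerivAt.sub_const (R b)).sub
    ((fderiv ℝ R b).hasFDerivAt.comp a ((hasFDerivAt_id a).sub_const b))

theorem bregman_three_point (R : (Fin n → ℝ) → ℝ) (u m b : Fin n → ℝ) :
    bregman R u b - bregman R u m - bregman R m b =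
      fderiv ℝ R m (u - m) - fderiv ℝ R b (u - m) := by
  have : u - b = (u - m) + (m - b) := by abel
  simp only [bregman, this, map_add]
  ring

theorem StronglyConvexOnWrt.le_bregman {F : Set (Fin n → ℝ)} {β : ℝ} {p : ℝ≥0∞}
    (hsc : StronglyConvexOnWrt F β p R) (hR : Differentiable ℝ R) {a b : Fin n → ℝ}
    (ha : a ∈ F) (hb : b ∈ F) :
    β / 2 * lpNorm p (a - b) ^ 2 ≤ bregman R a b := by
  set N := lpNorm p (a - b)
  -- `φ ≥ 0 = φ 0` on `[0, 1]` is strong convexity on the segment; `φ' 0 ≥ 0` is the claim.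
  let φ : ℝ → ℝ := fun l =>
    l * R a + (1 - l) * R b - β / 2 * l * (1 - l) * N ^ 2 - R (b + l • (a - b))
  have hmin : IsMinOn φ (Set.Icc 0 1) 0 := by
    intro l hl
    have hcomb : l • a + (1 - l) • b = b + l • (a - b) := by
      rw [sub_smul, one_smul, smul_sub]; abel
    have := hsc a ha b hb l hl.1 hl.2
    simp only [Set.mem_ofPred_eq, φ, hcomb] at this ⊢
    simp only [zero_smul, add_zero]
    linarith
  have hline : HasDerivAt (fun l : ℝ => b + l • (a - b)) (a - b) 0 := by
    simpa using ((hasDerivAt_id (0 : ℝ)).smul_const (a - b)).const_add b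
  have hRline : HasDerivAt (fun l : ℝ => R (b + l • (a - b))) (fderiv ℝ R b (a - b)) 0 := by
    have := (hR (b + (0 : ℝ) • (a - b))).hasFDerivAt.comp_hasDerivAt 0 hline
    rwa [zero_smul, add_zero] at this
  have hφ : HasDerivAt φ (R a - R b - β / 2 * N ^ 2 - fderiv ℝ R b (a - b)) 0 := by
    have hid := hasDerivAt_id' (0 : ℝ)
    have hone := hid.const_sub 1
    refine ((((hid.mul_const (R a)).add (hone.mul_const (R b))).sub
      (((hid.const_mul (β / 2)).mul hone).mul_const (N ^ 2))).sub hRline).congr_deriv ?_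
    ring
  have := hmin.hasFDerivAt_sub_nonneg (u := 1) (convex_Icc 0 1) (by simp) (by simp) hφ.hasFDerivAt
  simp only [sub_zero, ContinuousLinearMap.toSpanSingleton_apply, one_smul] at this
  unfold bregman
  linarith

theorem bregman_le_sSup_sub_sInf (hR : Differentiable ℝ R) {F : Set (Fin n → ℝ)}
    (hF : Convex ℝ F) (hFc : IsCompact F) {m u : Fin n → ℝ} (hm : m ∈ F)
    (hmin : IsMinOn R F m) (hu : u ∈ F) :
    bregman R u m ≤ sSup (R '' F) - sInf (R '' F) := by
  have hRF : IsCompact (R '' F) := hFc.image hR.continuous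
  have hRu : R u ≤ sSup (R '' F) := le_csSup hRF.bddAbove ⟨u, hu, rfl⟩
  have hRm : sInf (R '' F) ≤ R m := csInf_le hRF.bddBelow ⟨m, hm, rfl⟩
  have hfirst : 0 ≤ fderiv ℝ R m (u - m) :=
    hmin.hasFDerivAt_sub_nonneg hF hm hu (hR m).hasFDerivAt
  unfold bregman
  linarith

theorem add_bregman_le_of_isMinOn (hR : Differentiable ℝ R) {F : Set (Fin n → ℝ)}
    (hF : Convex ℝ F) {η : ℝ} {y b m u : Fin n → ℝ} (hm : m ∈ F)
    (hmin : IsMinOn (fun v => η * ip v y + bregman R v b) F m) (hu : u ∈ F) :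
    η * ip m y + bregman R m b + bregman R u m ≤ η * ip u y + bregman R u b := by
  have hip : (fun v => ip v y) = ipLeft y := funext fun v => (ipLeft_apply y v).symm
  have hφ : HasFDerivAt (fun v => η * ip v y + bregman R v b)
      (η • ipLeft y + (fderiv ℝ R m - fderiv ℝ R b)) m :=
    ((hip ▸ (ipLeft y).hasFDerivAt).const_mul η).add (hasFDerivAt_bregman_left (hR m) b)
  have hfirst := hmin.hasFDerivAt_sub_nonneg hF hm hu hφ
  simp only [add_apply, smul_apply, sub_apply, map_sub (ipLeft y), ipLeft_apply, smul_eq_mul,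
    mul_sub] at hfirst
  have := bregman_three_point R u m b
  linarith

end Bregman

theorem md_lookahead_bound_general {n T : ℕ} (p : ℝ≥0∞)
    (F : Set (Fin n → ℝ))
    (hFconv : Convex ℝ F) (hFcomp : IsCompact F)
    (η : ℝ) (hη : 0 < η) (β : ℝ) (hβ : 0 < β)
    (R : (Fin n → ℝ) → ℝ) (hdiff : Differentiable ℝ R)
    (hRsc : StronglyConvexOnWrt F β p R)
    (x : ℕ → (Fin n → ℝ))
    (g : ℕ → (Fin n → ℝ))
    (hg1 : g 1 ∈ F ∧ ∀ u ∈ F, R (g 1) ≤ R u)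
    (hg : ∀ t, 1 ≤ t → g (t + 1) ∈ F ∧
      ∀ u ∈ F, η * ip (g (t + 1)) (x t) + bregman R (g (t + 1)) (g t) ≤
        η * ip u (x t) + bregman R u (g t)) :
    ∀ f' ∈ F,
      (∑ t ∈ Finset.Icc 1 T, ip (g (t + 1)) (x t)) ≤
      (∑ t ∈ Finset.Icc 1 T, ip f' (x t)) + (sSup (R '' F) - sInf (R '' F)) / η -
        β / (2 * η) * ∑ t ∈ Finset.Icc 1 T, (lpNorm p (g (t + 1) - g t)) ^ 2 := by
  intro f' hf'
  have hgF : ∀ t, 1 ≤ t → g t ∈ F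
    | 1, _ => hg1.1
    | t + 2, _ => (hg (t + 1) (by omega)).1
  have hstep : ∀ t ∈ Finset.Icc 1 T,
      η * ip (g (t + 1)) (x t) + β / 2 * lpNorm p (g (t + 1) - g t) ^ 2 ≤
        η * ip f' (x t) + (bregman R f' (g t) - bregman R f' (g (t + 1))) := by
    intro t ht
    obtain ⟨hnext, hmin⟩ := hg t (Finset.mem_Icc.1 ht).1
    have hthree := add_bregman_le_of_isMinOn hdiff hFconv hnext (isMinOn_iff.2 hmin) hf'
    have hsc := hRsc.le_bregman hdiff hnext (hgF t (Finset.mem_Icc.1 ht).1)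
    linarith
  have hsum := Finset.sum_le_sum hstep
  rw [Finset.sum_add_distrib, Finset.sum_add_distrib, Finset.sum_Icc_one_sub_succ,
    ← Finset.mul_sum, ← Finset.mul_sum, ← Finset.mul_sum] at hsum
  have hfirst := bregman_le_sSup_sub_sInf hdiff hFconv hFcomp hg1.1 (isMinOn_iff.2 hg1.2) hf'
  have hlast : 0 ≤ bregman R f' (g (T + 1)) :=
    (mul_nonneg (half_pos hβ).le (sq_nonneg _)).trans
      (hRsc.le_bregman hdiff hf' (hgF _ (by omega)))
  rw [show ∀ A C S : ℝ, A + C / η - β / (2 * η) * S = (η * A + C - β / 2 * S) / η by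
    intros; field_simp, le_div_iff₀ hη]
  linarith

/-- **Be-the-leader bound for Mirror Descent with negative term.**
For every `f' ∈ F`:
`∑_{t=1}^T ⟨g (t+1), x t⟩ ≤ ∑_{t=1}^T ⟨f', x t⟩ + R_max²/η
  - (β/(2η)) ∑_{t=1}^T ‖g (t+1) - g t‖_p²`,
where `R_max² = max_{f∈F} R f - min_{f∈F} R f`. -/
theorem md_lookahead_bound {n T : ℕ} (p q : ℝ≥0∞)
    (hp : 1 ≤ p) (hq : 1 ≤ q) (hpq : 1 / p + 1 / q = 1)
    (F : Set (Fin n → ℝ)) (hF : F.Nonempty) (hFsub : F ⊆ Set.Icc 0 1)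
    (hFconv : Convex ℝ F) (hFcomp : IsCompact F)
    (η : ℝ) (hη : 0 < η) (β : ℝ) (hβ : 0 < β)
    (R : (Fin n → ℝ) → ℝ) (hdiff : Differentiable ℝ R)
    (hRsc : StronglyConvexOnWrt F β p R)
    (x : ℕ → (Fin n → ℝ)) (hx : ∀ t ∈ Finset.Icc 1 T, x t ∈ Set.Icc (0 : Fin n → ℝ) 1)
    (g : ℕ → (Fin n → ℝ))
    (hg1 : g 1 ∈ F ∧ ∀ u ∈ F, R (g 1) ≤ R u)
    (hg : ∀ t, 1 ≤ t → g (t + 1) ∈ F ∧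
      ∀ u ∈ F, η * ip (g (t + 1)) (x t) + bregman R (g (t + 1)) (g t) ≤
        η * ip u (x t) + bregman R u (g t)) :
    ∀ f' ∈ F,
      (∑ t ∈ Finset.Icc 1 T, ip (g (t + 1)) (x t)) ≤
      (∑ t ∈ Finset.Icc 1 T, ip f' (x t)) + (sSup (R '' F) - sInf (R '' F)) / η -
        β / (2 * η) * ∑ t ∈ Finset.Icc 1 T, (lpNorm p (g (t + 1) - g t)) ^ 2 :=
  md_lookahead_bound_general p F hFconv hFcomp η hη β hβ R hdiff hRsc x g hg1 hg
end
end

section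
/- Let F ⊆ [0,1]ⁿ be a nonempty compact set and let x₀, x₁, …, x_T ∈ ℝⁿ. For each t = 1,…,T let BR_t ∈ F minimize f ↦ ⟨f, x_{t-1}⟩ over F (best response to the previous loss). Then the dynamic regret of the best-response sequence satisfies Σ_{t=1}^T (⟨BR_t, x_t⟩ − min_{f∈F} ⟨f, x_t⟩) ≤ 2 Σ_{t=1}^T ‖x_t − x_{t-1}‖₁. -/
open scoped BigOperators

noncomputable section

/-- The `ℓ₁` norm on `ℝⁿ`. -/
def l1Norm {n : ℕ} (v : Fin n → ℝ) : ℝ := ∑ i, |v i|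

lemma ip_sub_le_l1 {n : ℕ} (f u v : Fin n → ℝ) (hf : f ∈ Set.Icc 0 1) :
    ip f u - ip f v ≤ l1Norm (u - v) := by
  have h : ip f u - ip f v = ∑ i, f i * (u i - v i) := by
    simp [ip, mul_sub, Finset.sum_sub_distrib]
  rw [h, l1Norm]
  refine (Finset.sum_le_sum fun i _ => ?_)
  have h0 : (0:ℝ) ≤ f i := hf.1 i
  have h1 : f i ≤ 1 := hf.2 i
  have := abs_mul (f i) (u i - v i)
  have hfi : |f i| ≤ 1 := abs_le.2 ⟨by linarith, h1⟩
  calc f i * (u i - v i) ≤ |f i * (u i - v i)| := le_abs_self _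
    _ = |f i| * |u i - v i| := abs_mul _ _
    _ ≤ 1 * |u i - v i| := mul_le_mul_of_nonneg_right hfi (abs_nonneg _)
    _ = |(u - v) i| := by simp

/-- **Dynamic regret of the best-response sequence.**
If `BR t` is a best response over `F` to the previous loss `x (t-1)`, then
`∑_{t=1}^T (⟨BR t, x t⟩ - min_{f∈F} ⟨f, x t⟩) ≤ 2 ∑_{t=1}^T ‖x t - x (t-1)‖₁`. -/
theorem best_response_dynamic_regret {n T : ℕ}
    (F : Set (Fin n → ℝ)) (hF : F.Nonempty) (hFsub : F ⊆ Set.Icc 0 1)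
    (hFcomp : IsCompact F)
    (x : ℕ → (Fin n → ℝ))
    (BR : ℕ → (Fin n → ℝ))
    (hBR : ∀ t ∈ Finset.Icc 1 T, BR t ∈ F ∧ ∀ f ∈ F, ip (BR t) (x (t - 1)) ≤ ip f (x (t - 1))) :
    ∑ t ∈ Finset.Icc 1 T, (ip (BR t) (x t) - sInf ((fun f => ip f (x t)) '' F)) ≤
      2 * ∑ t ∈ Finset.Icc 1 T, l1Norm (x t - x (t - 1)) := by
  rw [Finset.mul_sum]
  refine Finset.sum_le_sum fun t ht => ?_
  obtain ⟨hBRF, hBRmin⟩ := hBR t ht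
  have hkey : ip (BR t) (x t) - 2 * l1Norm (x t - x (t - 1)) ≤
      sInf ((fun f => ip f (x t)) '' F) := by
    refine le_csInf (hF.image _) ?_
    rintro b ⟨f, hfF, rfl⟩
    have h1 : ip (BR t) (x t) - ip (BR t) (x (t-1)) ≤ l1Norm (x t - x (t-1)) :=
      ip_sub_le_l1 _ _ _ (hFsub hBRF)
    have h2 : ip (BR t) (x (t-1)) ≤ ip f (x (t-1)) := hBRmin f hfF
    have h3 : ip f (x (t-1)) - ip f (x t) ≤ l1Norm (x (t-1) - x t) :=
      ip_sub_le_l1 _ _ _ (hFsub hfF)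
    have h4 : l1Norm (x (t-1) - x t) = l1Norm (x t - x (t-1)) := by
      simp [l1Norm, abs_sub_comm]
    linarith
  linarith
end
end

section
/- Let A be a real n×m matrix, η > 0, α > 0. Let (f*, y*) ∈ Δ_n × Δ_m be a Nash equilibrium of the zero-sum game A in which the f-player maximizes, i.e., fᵀAy* ≤ f*ᵀAy* ≤ f*ᵀAy for all f ∈ Δ_n and y ∈ Δ_m. Let f_{t-1}, f_t ∈ Δ_n with f_t(i) > 0 for all i and y_{t-1}, y_t ∈ Δ_m with y_t(i) > 0 for all i, and assume the extrapolated points lie in the simplices: (α+1)y_t − α y_{t-1} ∈ Δ_m and (α+1)f_t − α f_{t-1} ∈ Δ_n. Let f_{t+1}, y_{t+1} be the AMWU updates: f_{t+1}(i) = f_t(i)·exp(η((α+1)(A y_t)_i − α(A y_{t-1})_i)) / Σ_j f_t(j)·exp(η((α+1)(A y_t)_j − α(A y_{t-1})_j)) and y_{t+1}(i) = y_t(i)·exp(−η((α+1)(Aᵀ f_t)_i − α(Aᵀ f_{t-1})_i)) / Σ_j y_t(j)·exp(−η((α+1)(Aᵀ f_t)_j − α(Aᵀ f_{t-1})_j)).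 Then RE((f*,y*)‖(f_{t+1},y_{t+1})) − RE((f*,y*)‖(f_t,y_t)) ≤ log(Σ_i f_t(i)·exp(η·((A u)_i − f_tᵀA u))) + log(Σ_i y_t(i)·exp(η·(vᵀA(e_i − y_t)))) + ηα·(f_{t-1}ᵀA y_t − f_tᵀA y_{t-1}), where u := (α+1)y_t − α y_{t-1}, v := α f_{t-1} − (α+1) f_t, and e_i is the i-th standard basis vector. -/
open scoped BigOperators

noncomputable section

/-- `(Ay)_i = ∑_j A i j * y j`. -/
def mulVec' {n m : ℕ} (A : Matrix (Fin n) (Fin m) ℝ) (y : Fin m → ℝ) : Fin n → ℝ :=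
  fun i => ∑ j, A i j * y j

/-- `(Aᵀf)_j = ∑_i A i j * f i`. -/
def vecMul' {n m : ℕ} (A : Matrix (Fin n) (Fin m) ℝ) (f : Fin n → ℝ) : Fin m → ℝ :=
  fun j => ∑ i, A i j * f i

/-- `fᵀAy = ∑_{i,j} f i * A i j * y j`. -/
def quadForm {n m : ℕ} (A : Matrix (Fin n) (Fin m) ℝ) (f : Fin n → ℝ) (y : Fin m → ℝ) : ℝ :=
  ∑ i, ∑ j, f i * A i j * y j

/-- One KL term, with the convention that terms with `a = 0` contribute `0`. -/
def klTerm (a b : ℝ) : ℝ := if a = 0 then 0 else a * Real.log (a / b)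

/-- Relative entropy (KL divergence) between vectors on the simplex. -/
def RE' {k : ℕ} (p q : Fin k → ℝ) : ℝ := ∑ i, klTerm (p i) (q i)

lemma re_update {k : ℕ} (p q : Fin k → ℝ) (hp : p ∈ stdSimplex ℝ (Fin k))
    (hq : ∀ i, 0 < q i) (g : Fin k → ℝ) (r : Fin k → ℝ)
    (hr : ∀ i, r i = q i * Real.exp (g i) / ∑ j, q j * Real.exp (g j)) :
    RE' p r - RE' p q = Real.log (∑ j, q j * Real.exp (g j)) - ∑ i, p i * g i := by
  set Z := ∑ j, q j * Real.exp (g j) with hZdef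
  have hk : Nonempty (Fin k) := by
    by_contra hc
    rw [not_nonempty_iff] at hc
    have h2 := hp.2
    rw [Finset.univ_eq_empty, Finset.sum_empty] at h2
    norm_num at h2
  have hZ : 0 < Z := Finset.sum_pos (fun j _ => mul_pos (hq j) (Real.exp_pos _))
    Finset.univ_nonempty
  have hterm : ∀ i, klTerm (p i) (r i) - klTerm (p i) (q i) = p i * (Real.log Z - g i) := by
    intro i
    by_cases hpi : p i = 0
    · simp [klTerm, hpi]
    · have hp0 : 0 < p i := lt_of_le_of_ne (hp.1 i) (Ne.symm hpi)
      have hr0 : 0 < r i := by rw [hr i]; exact div_pos (mul_pos (hq i) (Real.exp_pos _)) hZ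
      simp only [klTerm, if_neg hpi]
      rw [Real.log_div hpi (ne_of_gt hr0), Real.log_div hpi (ne_of_gt (hq i)), hr i,
        Real.log_div (mul_pos (hq i) (Real.exp_pos _)).ne' (ne_of_gt hZ),
        Real.log_mul (ne_of_gt (hq i)) (Real.exp_ne_zero _), Real.log_exp]
      ring
  have : RE' p r - RE' p q = ∑ i, (klTerm (p i) (r i) - klTerm (p i) (q i)) := by
    rw [RE', RE', Finset.sum_sub_distrib]
  rw [this, Finset.sum_congr rfl (fun i _ => hterm i)]
  have : ∑ i, p i * (Real.log Z - g i) = (∑ i, p i) * Real.log Z - ∑ i, p i * g i := by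
    rw [Finset.sum_mul, ← Finset.sum_sub_distrib]
    exact Finset.sum_congr rfl fun i _ => by ring
  rw [this, hp.2, one_mul]

lemma quadForm_eq_mulVec {n m : ℕ} (A : Matrix (Fin n) (Fin m) ℝ) (f : Fin n → ℝ)
    (y : Fin m → ℝ) : quadForm A f y = ∑ i, f i * mulVec' A y i := by
  unfold quadForm mulVec'
  refine Finset.sum_congr rfl fun i _ => ?_
  rw [Finset.mul_sum]
  refine Finset.sum_congr rfl fun j _ => ?_
  ring

lemma quadForm_eq_vecMul {n m : ℕ} (A : Matrix (Fin n) (Fin m) ℝ) (f : Fin n → ℝ)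
    (y : Fin m → ℝ) : quadForm A f y = ∑ j, y j * vecMul' A f j := by
  unfold quadForm vecMul'
  rw [Finset.sum_comm]
  refine Finset.sum_congr rfl fun j _ => ?_
  rw [Finset.mul_sum]
  refine Finset.sum_congr rfl fun i _ => ?_
  ring

lemma quadForm_basis_sub {n m : ℕ} (A : Matrix (Fin n) (Fin m) ℝ) (i : Fin m) (v : Fin n → ℝ) (ycur : Fin m → ℝ) :
    quadForm A v (fun j => (if j = i then 1 else 0) - ycur j)
      = vecMul' A v i - quadForm A v ycur := by
  unfold quadForm vecMul'
  rw [← Finset.sum_sub_distrib]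
  refine Finset.sum_congr rfl fun k _ => ?_
  have : ∀ j, v k * A k j * ((if j = i then 1 else 0) - ycur j)
      = (if j = i then v k * A k j else 0) - v k * A k j * ycur j := by
    intro j; by_cases hj : j = i <;> simp [hj] <;> ring_nf
  rw [Finset.sum_congr rfl fun j _ => this j, Finset.sum_sub_distrib,
    Finset.sum_ite_eq' Finset.univ i]
  simp [mul_comm]

/-- **One-step KL decrease bound for AMWU at a Nash equilibrium** (cf. Theorem 12's proof).
If `(f*, y*)` is a Nash equilibrium (f maximizing) and the extrapolated points
`u = (α+1)ycur − α yprev` and `(α+1)fcur − α fprev` lie in the simplices, then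
`RE((f*,y*)‖(fnext,ynext)) − RE((f*,y*)‖(fcur,ycur))
  ≤ log(∑_i fcur i · e^{η((Au)_i − fcurᵀAu)}) + log(∑_i ycur i · e^{η vᵀA(e_i − ycur)})
    + ηα(fprevᵀA ycur − fcurᵀA yprev)`, where `v = α fprev − (α+1) fcur`. -/
theorem amwu_kl_decrease_bound {n m : ℕ} (A : Matrix (Fin n) (Fin m) ℝ)
    (η α : ℝ) (hη : 0 < η) (hα : 0 < α)
    (fstar : Fin n → ℝ) (hfstar : fstar ∈ stdSimplex ℝ (Fin n))
    (ystar : Fin m → ℝ) (hystar : ystar ∈ stdSimplex ℝ (Fin m))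
    (hNE1 : ∀ f ∈ stdSimplex ℝ (Fin n), quadForm A f ystar ≤ quadForm A fstar ystar)
    (hNE2 : ∀ y ∈ stdSimplex ℝ (Fin m), quadForm A fstar ystar ≤ quadForm A fstar y)
    (fprev fcur : Fin n → ℝ)
    (hfprev : fprev ∈ stdSimplex ℝ (Fin n)) (hfcur : fcur ∈ stdSimplex ℝ (Fin n))
    (hfpos : ∀ i, 0 < fcur i)
    (yprev ycur : Fin m → ℝ)
    (hyprev : yprev ∈ stdSimplex ℝ (Fin m)) (hycur : ycur ∈ stdSimplex ℝ (Fin m))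
    (hypos : ∀ i, 0 < ycur i)
    (u : Fin m → ℝ) (hu : ∀ j, u j = (α + 1) * ycur j - α * yprev j)
    (v : Fin n → ℝ) (hv : ∀ i, v i = α * fprev i - (α + 1) * fcur i)
    (humem : u ∈ stdSimplex ℝ (Fin m))
    (hfext : (fun i => (α + 1) * fcur i - α * fprev i) ∈ stdSimplex ℝ (Fin n))
    (fnext : Fin n → ℝ)
    (hfnext : ∀ i, fnext i =
      fcur i * Real.exp (η * ((α + 1) * mulVec' A ycur i - α * mulVec' A yprev i)) /
        ∑ j, fcur j * Real.exp (η * ((α + 1) * mulVec' A ycur j - α * mulVec' A yprev j)))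
    (ynext : Fin m → ℝ)
    (hynext : ∀ i, ynext i =
      ycur i * Real.exp (-η * ((α + 1) * vecMul' A fcur i - α * vecMul' A fprev i)) /
        ∑ j, ycur j * Real.exp (-η * ((α + 1) * vecMul' A fcur j - α * vecMul' A fprev j))) :
    (RE' fstar fnext + RE' ystar ynext) - (RE' fstar fcur + RE' ystar ycur) ≤
      Real.log (∑ i, fcur i * Real.exp (η * (mulVec' A u i - quadForm A fcur u)))
      + Real.log (∑ i, ycur i *
          Real.exp (η * quadForm A v (fun j => (if j = i then 1 else 0) - ycur j)))
      + η * α * (quadForm A fprev ycur - quadForm A fcur yprev) := by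
  set g : Fin n → ℝ := fun i => η * ((α + 1) * mulVec' A ycur i - α * mulVec' A yprev i) with hg
  set h : Fin m → ℝ := fun i => -η * ((α + 1) * vecMul' A fcur i - α * vecMul' A fprev i) with hh
  -- linearity of mulVec'/vecMul'
  have hmu : ∀ i, mulVec' A u i = (α + 1) * mulVec' A ycur i - α * mulVec' A yprev i := by
    intro i
    unfold mulVec'
    rw [Finset.mul_sum, Finset.mul_sum, ← Finset.sum_sub_distrib]
    refine Finset.sum_congr rfl fun j _ => ?_
    rw [hu j]; ring
  have hmv : ∀ i, vecMul' A v i = α * vecMul' A fprev i - (α + 1) * vecMul' A fcur i := by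
    intro i
    unfold vecMul'
    rw [Finset.mul_sum, Finset.mul_sum, ← Finset.sum_sub_distrib]
    refine Finset.sum_congr rfl fun k _ => ?_
    rw [hv k]; ring
  have hgv : ∀ i, g i = η * mulVec' A u i := fun i => by rw [hmu i]
  have hhv : ∀ i, h i = η * vecMul' A v i := by intro i; rw [hmv i, hh]; ring
  -- RE differences
  have hfre : RE' fstar fnext - RE' fstar fcur
      = Real.log (∑ j, fcur j * Real.exp (g j)) - ∑ i, fstar i * g i :=
    re_update fstar fcur hfstar hfpos g fnext hfnext
  have hyre : RE' ystar ynext - RE' ystar ycur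
      = Real.log (∑ j, ycur j * Real.exp (h j)) - ∑ i, ystar i * h i :=
    re_update ystar ycur hystar hypos h ynext hynext
  -- Z positivity
  have hnn : Nonempty (Fin n) := by
    by_contra hc
    rw [not_nonempty_iff] at hc
    have h2 := hfstar.2
    rw [Finset.univ_eq_empty, Finset.sum_empty] at h2
    norm_num at h2
  have hnm : Nonempty (Fin m) := by
    by_contra hc
    rw [not_nonempty_iff] at hc
    have h2 := hystar.2
    rw [Finset.univ_eq_empty, Finset.sum_empty] at h2
    norm_num at h2
  have hZf : 0 < ∑ j, fcur j * Real.exp (g j) :=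
    Finset.sum_pos (fun j _ => mul_pos (hfpos j) (Real.exp_pos _)) Finset.univ_nonempty
  have hZy : 0 < ∑ j, ycur j * Real.exp (h j) :=
    Finset.sum_pos (fun j _ => mul_pos (hypos j) (Real.exp_pos _)) Finset.univ_nonempty
  -- the sums on fstar/ystar
  have hSg : ∑ i, fstar i * g i = η * quadForm A fstar u := by
    rw [quadForm_eq_mulVec, Finset.mul_sum]
    refine Finset.sum_congr rfl fun i _ => ?_
    rw [hgv i]; ring
  have hSh : ∑ i, ystar i * h i = η * quadForm A v ystar := by
    rw [quadForm_eq_vecMul, Finset.mul_sum]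
    refine Finset.sum_congr rfl fun i _ => ?_
    rw [hhv i]; ring
  -- RHS log terms
  have hrhs1 : Real.log (∑ i, fcur i * Real.exp (η * (mulVec' A u i - quadForm A fcur u)))
      = Real.log (∑ j, fcur j * Real.exp (g j)) - η * quadForm A fcur u := by
    have hsum : (∑ i, fcur i * Real.exp (η * (mulVec' A u i - quadForm A fcur u)))
        = (∑ j, fcur j * Real.exp (g j)) * Real.exp (-(η * quadForm A fcur u)) := by
      rw [Finset.sum_mul]
      refine Finset.sum_congr rfl fun i _ => ?_
      rw [mul_assoc, ← Real.exp_add, hgv i]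
      ring_nf
    rw [hsum, Real.log_mul (ne_of_gt hZf) (Real.exp_ne_zero _), Real.log_exp]
    ring
  have hrhs2 : Real.log (∑ i, ycur i *
        Real.exp (η * quadForm A v (fun j => (if j = i then 1 else 0) - ycur j)))
      = Real.log (∑ j, ycur j * Real.exp (h j)) - η * quadForm A v ycur := by
    have hsum : (∑ i, ycur i *
          Real.exp (η * quadForm A v (fun j => (if j = i then 1 else 0) - ycur j)))
        = (∑ j, ycur j * Real.exp (h j)) * Real.exp (-(η * quadForm A v ycur)) := by
      rw [Finset.sum_mul]
      refine Finset.sum_congr rfl fun i _ => ?_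
      rw [mul_assoc, ← Real.exp_add, hhv i, quadForm_basis_sub]
      ring_nf
    rw [hsum, Real.log_mul (ne_of_gt hZy) (Real.exp_ne_zero _), Real.log_exp]
    ring
  -- bilinearity facts
  have hb1 : quadForm A fcur u = (α + 1) * quadForm A fcur ycur - α * quadForm A fcur yprev := by
    unfold quadForm
    rw [Finset.mul_sum, Finset.mul_sum, ← Finset.sum_sub_distrib]
    refine Finset.sum_congr rfl fun i _ => ?_
    rw [Finset.mul_sum, Finset.mul_sum, ← Finset.sum_sub_distrib]
    refine Finset.sum_congr rfl fun j _ => ?_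
    rw [hu j]; ring
  have hb2 : ∀ y : Fin m → ℝ,
      quadForm A v y = α * quadForm A fprev y - (α + 1) * quadForm A fcur y := by
    intro y
    unfold quadForm
    rw [Finset.mul_sum, Finset.mul_sum, ← Finset.sum_sub_distrib]
    refine Finset.sum_congr rfl fun i _ => ?_
    rw [Finset.mul_sum, Finset.mul_sum, ← Finset.sum_sub_distrib]
    refine Finset.sum_congr rfl fun j _ => ?_
    rw [hv i]; ring
  have hb3 : quadForm A (fun i => (α + 1) * fcur i - α * fprev i) ystar
      = (α + 1) * quadForm A fcur ystar - α * quadForm A fprev ystar := by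
    unfold quadForm
    rw [Finset.mul_sum, Finset.mul_sum, ← Finset.sum_sub_distrib]
    refine Finset.sum_congr rfl fun i _ => ?_
    rw [Finset.mul_sum, Finset.mul_sum, ← Finset.sum_sub_distrib]
    refine Finset.sum_congr rfl fun j _ => ?_
    ring
  -- Nash inequalities
  have hne1 := hNE1 _ hfext
  rw [hb3] at hne1
  have hne2 := hNE2 u humem
  have hpos : 0 ≤ quadForm A fstar u + quadForm A v ystar := by
    rw [hb2 ystar]; linarith
  have hnnη : 0 ≤ η * quadForm A fstar u + η * quadForm A v ystar := by
    nlinarith [mul_nonneg hη.le hpos]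
  have hc2 : η * quadForm A fcur u + η * quadForm A v ycur
      = η * α * (quadForm A fprev ycur - quadForm A fcur yprev) := by
    rw [hb1, hb2 ycur]; ring
  have hL : (RE' fstar fnext + RE' ystar ynext) - (RE' fstar fcur + RE' ystar ycur)
      = (RE' fstar fnext - RE' fstar fcur) + (RE' ystar ynext - RE' ystar ycur) := by ring
  rw [hL, hfre, hyre, hSg, hSh, hrhs1, hrhs2]
  linarith [hc2, hnnη]
end
end

section
/- Let f* ∈ Δ_n, y* ∈ Δ_m, and let f ∈ Δ_n and y ∈ Δ_m have all coordinates strictly positive. Suppose the relative entropy from (f*,y*) to (f,y) does not exceed the relative entropy from (f*,y*) to the uniform pair, i.e., Σ_i f*(i)·log(f*(i)/f(i)) + Σ_i y*(i)·log(y*(i)/y(i)) ≤ Σ_i f*(i)·log(n·f*(i)) + Σ_i y*(i)·log(m·y*(i)). Then for every index i with f*(i) > 0, f(i) ≥ (nm)^{−1/f*(i)}, and symmetrically for every index j with y*(j) > 0, y(j) ≥ (nm)^{−1/y*(j)}. -/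
open scoped BigOperators

noncomputable section

lemma aux_diff {k : ℕ} (p q : Fin k → ℝ) (hp1 : ∑ i, p i = 1)
    (hqpos : ∀ i, 0 < q i) :
    (∑ i, if p i = 0 then 0 else p i * Real.log (k * p i)) - RE' p q
      = Real.log k - ∑ i, (if p i = 0 then 0 else -(p i * Real.log (q i))) := by
  have hk : 0 < k := by
    rcases Nat.eq_zero_or_pos k with h | h
    · subst h; simp at hp1
    · exact h
  have hk' : (0:ℝ) < (k : ℝ) := by exact_mod_cast hk
  rw [RE', ← Finset.sum_sub_distrib]
  have key : ∀ i : Fin k,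
      ((if p i = 0 then 0 else p i * Real.log (k * p i)) - klTerm (p i) (q i))
      = p i * Real.log k - (if p i = 0 then 0 else -(p i * Real.log (q i))) := by
    intro i
    by_cases h : p i = 0
    · simp [klTerm, h]
    · simp only [klTerm, if_neg h]
      rw [Real.log_mul hk'.ne' h, Real.log_div h (hqpos i).ne']
      ring
  rw [Finset.sum_congr rfl (fun i _ => key i), Finset.sum_sub_distrib, ← Finset.sum_mul, hp1]
  ring

lemma aux_nonneg {k : ℕ} (p q : Fin k → ℝ) (hp : ∀ i, 0 ≤ p i)
    (hqpos : ∀ i, 0 < q i) (hq1 : ∑ i, q i = 1) :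
    ∀ i : Fin k, 0 ≤ (if p i = 0 then 0 else -(p i * Real.log (q i))) := by
  intro i
  by_cases h : p i = 0
  · simp [h]
  · simp only [if_neg h]
    have hq_le : q i ≤ 1 := by
      rw [← hq1]
      exact Finset.single_le_sum (fun j _ => (hqpos j).le) (Finset.mem_univ i)
    have : Real.log (q i) ≤ 0 := Real.log_nonpos (hqpos i).le hq_le
    nlinarith [hp i, this]

lemma final_step (a b L : ℝ) (ha : 0 < a) (hb : 0 < b) (hL : 0 < L)
    (hbound : -(a * Real.log b) ≤ Real.log L) :
    L ^ (-(1 / a)) ≤ b := by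
  rw [Real.rpow_def_of_pos hL]
  have hb' : b = Real.exp (Real.log b) := (Real.exp_log hb).symm
  rw [hb']
  apply Real.exp_le_exp.mpr
  rw [mul_neg, neg_le]
  rw [mul_one_div, le_div_iff₀ ha]
  nlinarith

/-- **Lower bound on equilibrium-support coordinates (Lemma 13 in the paper).**
If `RE((f*,y*)‖(f,y)) ≤ RE((f*,y*)‖(uniform, uniform))`, then every coordinate of `f`
on the support of `f*` satisfies `f i ≥ (nm)^{-1/f* i}`, and symmetrically for `y`. -/
theorem support_coordinate_lower_bound {n m : ℕ}
    (fstar f : Fin n → ℝ) (ystar y : Fin m → ℝ)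
    (hfstar : fstar ∈ stdSimplex ℝ (Fin n)) (hf : f ∈ stdSimplex ℝ (Fin n))
    (hystar : ystar ∈ stdSimplex ℝ (Fin m)) (hy : y ∈ stdSimplex ℝ (Fin m))
    (hfpos : ∀ i, 0 < f i) (hypos : ∀ j, 0 < y j)
    (hRE : RE' fstar f + RE' ystar y ≤
      (∑ i, if fstar i = 0 then 0 else fstar i * Real.log (n * fstar i)) +
      (∑ j, if ystar j = 0 then 0 else ystar j * Real.log (m * ystar j))) :
    (∀ i, 0 < fstar i → ((n * m : ℝ)) ^ (-(1 / fstar i)) ≤ f i) ∧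
    (∀ j, 0 < ystar j → ((n * m : ℝ)) ^ (-(1 / ystar j)) ≤ y j) := by
  have hn : 0 < n := by
    rcases Nat.eq_zero_or_pos n with h | h
    · exfalso; subst h; have := hf.2; simp at this
    · exact h
  have hm : 0 < m := by
    rcases Nat.eq_zero_or_pos m with h | h
    · exfalso; subst h; have := hy.2; simp at this
    · exact h
  have hn' : (0:ℝ) < (n:ℝ) := by exact_mod_cast hn
  have hm' : (0:ℝ) < (m:ℝ) := by exact_mod_cast hm
  have hnm : (0:ℝ) < (n:ℝ) * m := by positivity
  have hlog : Real.log ((n:ℝ) * m) = Real.log n + Real.log m :=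
    Real.log_mul hn'.ne' hm'.ne'
  have hdf := aux_diff fstar f hfstar.2 hfpos
  have hdy := aux_diff ystar y hystar.2 hypos
  set A := ∑ i, (if fstar i = 0 then 0 else -(fstar i * Real.log (f i))) with hA
  set B := ∑ j, (if ystar j = 0 then 0 else -(ystar j * Real.log (y j))) with hB
  have hsum : A + B ≤ Real.log n + Real.log m := by linarith
  have hAnn := aux_nonneg fstar f hfstar.1 hfpos hf.2
  have hBnn := aux_nonneg ystar y hystar.1 hypos hy.2
  have hA0 : 0 ≤ A := Finset.sum_nonneg (fun i _ => hAnn i)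
  have hB0 : 0 ≤ B := Finset.sum_nonneg (fun j _ => hBnn j)
  constructor
  · intro i hi
    have hterm : (if fstar i = 0 then 0 else -(fstar i * Real.log (f i))) ≤ A :=
      Finset.single_le_sum (fun j _ => hAnn j) (Finset.mem_univ i)
    rw [if_neg hi.ne'] at hterm
    have hbound : -(fstar i * Real.log (f i)) ≤ Real.log ((n:ℝ) * m) := by
      rw [hlog]; linarith
    exact final_step (fstar i) (f i) _ hi (hfpos i) hnm hbound
  · intro j hj
    have hterm : (if ystar j = 0 then 0 else -(ystar j * Real.log (y j))) ≤ B :=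
      Finset.single_le_sum (fun i _ => hBnn i) (Finset.mem_univ j)
    rw [if_neg hj.ne'] at hterm
    have hbound : -(ystar j * Real.log (y j)) ≤ Real.log ((n:ℝ) * m) := by
      rw [hlog]; linarith
    exact final_step (ystar j) (y j) _ hj (hypos j) hnm hbound
end
end

section
/- For every real α ≥ 1 there exists σ₀ > 0 such that for every real σ with 0 < |σ| ≤ σ₀ and every complex number λ satisfying λ² − (1 + iσ(α+1))λ + iσα = 0, one has |λ| < 1. -/
/-!
Dividing the quadratic by `λ` puts a root in the fixed-point form `λ = 1 + iσc` with
`c = α + 1 - α/λ`. Since `Im λ = σ Re c` and `Im c = -α Im (1/λ) = α Im λ / |λ|²`, this gives the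
exact identity `|λ|² = 1 + σ² (|c|² - 2α Re c / |λ|²)`. If `|λ| ≥ 1`, then `1/λ` and `c` are within
`O(σ)` of `1`, so the bracket is close to `1 - 2α ≤ -1`, forcing `|λ| < 1`.
-/

open Complex

theorem norm_inv_sub_one_le {𝕜 : Type*} [NormedDivisionRing 𝕜] {z : 𝕜} (hz : 1 ≤ ‖z‖) :
    ‖z⁻¹ - 1‖ ≤ ‖z - 1‖ := by
  have hz0 : z ≠ 0 := norm_pos_iff.mp (by linarith)
  calc ‖z⁻¹ - 1‖ = ‖z⁻¹‖ * ‖z - 1‖ := by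
        rw [← norm_mul, mul_sub, inv_mul_cancel₀ hz0, mul_one, ← norm_neg, neg_sub]
    _ ≤ 1 * ‖z - 1‖ := by
        gcongr; rw [norm_inv]; exact inv_le_one_of_one_le₀ hz
    _ = ‖z - 1‖ := one_mul _

theorem Complex.normSq_one_add_I_mul (σ : ℝ) (c : ℂ) :
    normSq (1 + I * σ * c) = 1 - 2 * σ * c.im + σ ^ 2 * normSq c := by
  simp only [normSq_apply, add_re, add_im, mul_re, mul_im, I_re, I_im, ofReal_re, ofReal_im,
    one_re, one_im]
  ring

namespace AMWU

theorem eq_one_add_I_mul_of_root {α σ : ℝ} {z : ℂ} (hz : z ≠ 0)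
    (h : z ^ 2 - (1 + I * σ * (α + 1)) * z + I * σ * α = 0) :
    z = 1 + I * σ * (α + 1 - α * z⁻¹) := by
  field_simp
  linear_combination h

theorem normSq_eq_of_eq_one_add_I_mul {α σ : ℝ} {z c : ℂ} (hc : c = α + 1 - α * z⁻¹)
    (hz : z = 1 + I * σ * c) :
    normSq z = 1 + σ ^ 2 * (normSq c - 2 * α * c.re * normSq z⁻¹) := by
  have him_z : z.im = σ * c.re := by
    rw [hz]; simp
  have him_c : c.im = α * σ * c.re * normSq z⁻¹ := by
    have : c.im = -α * (z⁻¹).im := by rw [hc]; simp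
    rw [this, inv_im, him_z, map_inv₀]
    ring
  rw [hz, normSq_one_add_I_mul, ← hz, him_c]
  ring

theorem norm_inv_sub_one_le_of_eq_one_add_I_mul {α σ : ℝ} (hα : 0 ≤ α) {z : ℂ}
    (hz1 : 1 ≤ ‖z‖) (hz : z = 1 + I * σ * (α + 1 - α * z⁻¹)) :
    ‖z⁻¹ - 1‖ ≤ |σ| * (2 * α + 1) := by
  have hc : ‖(α : ℂ) + 1 - α * z⁻¹‖ ≤ 2 * α + 1 := by
    have hw : ‖z⁻¹‖ ≤ 1 := by rw [norm_inv]; exact inv_le_one_of_one_le₀ hz1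
    calc ‖(α : ℂ) + 1 - α * z⁻¹‖ ≤ ‖((α + 1 : ℝ) : ℂ)‖ + ‖(α : ℂ) * z⁻¹‖ := by
          push_cast; exact norm_sub_le _ _
      _ ≤ 2 * α + 1 := by
        rw [norm_mul, norm_real, norm_real, Real.norm_of_nonneg hα,
          Real.norm_of_nonneg (by linarith)]
        nlinarith
  calc ‖z⁻¹ - 1‖ ≤ ‖z - 1‖ := norm_inv_sub_one_le hz1
    _ = |σ| * ‖(α : ℂ) + 1 - α * z⁻¹‖ := by
        conv_lhs => rw [hz]
        simp
    _ ≤ |σ| * (2 * α + 1) := by gcongr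

theorem normSq_lt_of_norm_sub_one_le {α : ℝ} (hα : 1 ≤ α) {c w : ℂ} (hc : ‖c - 1‖ ≤ 1 / 8)
    (hw : ‖w - 1‖ ≤ 1 / 8) :
    normSq c < 2 * α * c.re * normSq w := by
  have hc_norm : ‖c‖ ≤ 9 / 8 := by
    linarith [norm_le_norm_add_norm_sub' c 1, norm_one (α := ℂ)]
  have hc_re : 7 / 8 ≤ c.re := by
    have := (abs_le.mp ((abs_re_le_norm (c - 1)).trans hc)).1
    simp only [sub_re, one_re] at this
    linarith
  have hw_norm : 7 / 8 ≤ ‖w‖ := by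
    linarith [norm_le_norm_add_norm_sub w 1, norm_one (α := ℂ), norm_sub_rev w 1]
  rw [normSq_eq_norm_sq, normSq_eq_norm_sq]
  calc ‖c‖ ^ 2 ≤ (9 / 8) ^ 2 := by gcongr
    _ < 2 * 1 * (7 / 8) * (7 / 8) ^ 2 := by norm_num
    _ ≤ 2 * α * c.re * ‖w‖ ^ 2 := by gcongr

end AMWU

open AMWU

/-- **Spectral estimate for the AMWU Jacobian** (key step of Theorem 17 in the paper).
For every `α ≥ 1` there is `σ₀ > 0` such that for all real `σ` with `0 < |σ| ≤ σ₀`,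
every complex root `λ` of `λ² − (1 + iσ(α+1))λ + iσα = 0` satisfies `|λ| < 1`. -/
theorem amwu_jacobian_root_bound (α : ℝ) (hα : 1 ≤ α) :
    ∃ σ₀ : ℝ, 0 < σ₀ ∧ ∀ σ : ℝ, 0 < |σ| → |σ| ≤ σ₀ →
      ∀ lam : ℂ,
        lam ^ 2 - (1 + Complex.I * (σ : ℂ) * ((α : ℂ) + 1)) * lam + Complex.I * (σ : ℂ) * (α : ℂ) = 0 →
        ‖lam‖ < 1 := by
  have hα0 : 0 < α := by linarith
  refine ⟨1 / (8 * α * (2 * α + 1)), by positivity, fun σ hσ hσ₀ z hz => ?_⟩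
  by_contra! hz1
  set c : ℂ := α + 1 - α * z⁻¹ with hc
  have hzc : z = 1 + I * σ * c := eq_one_add_I_mul_of_root (norm_pos_iff.mp (by linarith)) hz
  have hw : ‖z⁻¹ - 1‖ ≤ |σ| * (2 * α + 1) := norm_inv_sub_one_le_of_eq_one_add_I_mul hα0.le hz1 hzc
  have hσα : α * (|σ| * (2 * α + 1)) ≤ 1 / 8 := by
    rw [le_div_iff₀ (by positivity)] at hσ₀
    linarith
  have hc1 : ‖c - 1‖ ≤ 1 / 8 := by
    rw [show c - 1 = -(α * (z⁻¹ - 1)) by rw [hc]; ring, norm_neg, norm_mul, norm_real,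
      Real.norm_of_nonneg hα0.le]
    nlinarith
  have hw1 : ‖z⁻¹ - 1‖ ≤ 1 / 8 := by nlinarith [norm_nonneg (z⁻¹ - 1)]
  have hbracket := normSq_lt_of_norm_sub_one_le hα hc1 hw1
  have hσ2 : 0 < σ ^ 2 := by simpa only [sq_abs] using pow_pos hσ 2
  have hsq_lt : ‖z‖ ^ 2 < 1 := by
    rw [← normSq_eq_norm_sq, normSq_eq_of_eq_one_add_I_mul hc hzc]
    nlinarith
  nlinarith
end
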